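/- Assume G(m) is Buchsbaum and let i be an index with a_i > b_i. Then l_i < a_i − b_i, where l_i = max{ l ∈ ℕ : t^{ω_i + l g_1}* ∈ (0 :_{G(m)} 𝓜^r) }. -/

import Mathlib

/-!
Common setup: the numerical semigroup ring `R = k[[t^S]]`, its maximal ideal `m`,
the associated graded ring `G(m)` (realized as the Rees algebra `R[mt]` modulo
the extension of `m`, the standard presentation of `⊕_{h≥0} m^h/m^{h+1}`),
the homogeneous maximal ideal `𝓜`, the reduction number `r`, initial forms
`t^s*`, Apery sets, the invariants `a_i`, `b_i`, `l_i`, the order function,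
the partial order `≤_M`, symmetry, `M`-purity, Buchsbaumness and
Cohen-Macaulayness (via their characterizations `(0:𝓜) = (0:𝓜^r)` and
`(0:𝓜^r) = 0` valid in this one-dimensional graded setting).
-/

set_option maxHeartbeats 1000000
set_option synthInstance.maxHeartbeats 1000000

open scoped Pointwise
open Polynomial

noncomputable section

namespace NumSgrp

/-- The numerical semigroup `S` generated by `g 0 < g 1 < ⋯ < g n`. -/
def S {n : ℕ} (g : Fin (n + 1) → ℕ) : AddSubmonoid ℕ := AddSubmonoid.closure (Set.range g)

/-- `setM g h` is the `h`-fold sumset `M + ⋯ + M` of the maximal ideal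
`M = S \ {0}`; by convention `setM g 0 = S` (corresponding to `m^0 = R`). -/
def setM {n : ℕ} (g : Fin (n + 1) → ℕ) : ℕ → Set ℕ
  | 0 => (S g : Set ℕ)
  | h+1 => ({u : ℕ | u ∈ S g ∧ u ≠ 0} + setM g h : Set ℕ)

/-- `ordS g s` = ord(s) = max { h | s ∈ hM }. -/
def ordS {n : ℕ} (g : Fin (n + 1) → ℕ) (s : ℕ) : ℕ := sSup {h | s ∈ setM g h}

/-- `ap g i` = ω_i, the least element of `S` congruent to `i` modulo `g 0`. -/
def ap {n : ℕ} (g : Fin (n + 1) → ℕ) (i : ℕ) : ℕ := sInf {s | s ∈ S g ∧ s % g 0 = i}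

/-- The Apery set `Ap_{g_1}(S) = {ω_0, …, ω_{g_1-1}}`. -/
def apSet {n : ℕ} (g : Fin (n + 1) → ℕ) : Set ℕ := {s | ∃ i < g 0, s = ap g i}

/-- The blow-up `S' = ⟨g_1, g_2 - g_1, …, g_n - g_1⟩`. -/
def S' {n : ℕ} (g : Fin (n + 1) → ℕ) : AddSubmonoid ℕ :=
  AddSubmonoid.closure (insert (g 0) (Set.range fun i => g i - g 0))

/-- `ap' g i` = ω'_i, the least element of `S'` congruent to `i` modulo `g 0`. -/
def ap' {n : ℕ} (g : Fin (n + 1) → ℕ) (i : ℕ) : ℕ := sInf {s | s ∈ S' g ∧ s % g 0 = i}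

/-- The Apery set `Ap_{g_1}(S') = {ω'_0, …, ω'_{g_1-1}}`. -/
def apSet' {n : ℕ} (g : Fin (n + 1) → ℕ) : Set ℕ := {s | ∃ i < g 0, s = ap' g i}

/-- `aa g i` = a_i, the unique integer with ω_i = ω'_i + a_i g_1. -/
def aa {n : ℕ} (g : Fin (n + 1) → ℕ) (i : ℕ) : ℕ := (ap g i - ap' g i) / g 0

/-- `bb g i` = b_i = ord(ω_i). -/
def bb {n : ℕ} (g : Fin (n + 1) → ℕ) (i : ℕ) : ℕ := ordS g (ap g i)

/-- The partial order `u ≤_M u'`: there is `s ∈ S` with `u + s = u'` and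
`ord u + ord s = ord u'`. -/
def leM {n : ℕ} (g : Fin (n + 1) → ℕ) (u v : ℕ) : Prop :=
  ∃ s ∈ S g, u + s = v ∧ ordS g u + ordS g s = ordS g v

/-- `maxAp_M(S)`: the maximal elements of the Apery set w.r.t. `≤_M`. -/
def maxAp {n : ℕ} (g : Fin (n + 1) → ℕ) : Set ℕ :=
  {u | u ∈ apSet g ∧ ∀ v ∈ apSet g, leM g u v → v = u}

/-- `S` is `M`-pure: all elements of `maxAp_M(S)` have the same order. -/
def MPure {n : ℕ} (g : Fin (n + 1) → ℕ) : Prop :=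
  ∀ u ∈ maxAp g, ∀ v ∈ maxAp g, ordS g u = ordS g v

/-- `S` viewed inside `ℤ`. -/
def SZ {n : ℕ} (g : Fin (n + 1) → ℕ) : Set ℤ := {x | ∃ s ∈ S g, (s : ℤ) = x}

/-- The Frobenius number `g(S) = max (ℤ \ S)`. -/
def frob {n : ℕ} (g : Fin (n + 1) → ℕ) : ℤ := sSup {x : ℤ | x ∉ SZ g}

/-- `S` is symmetric: for every `x ∈ ℤ`, `x ∉ S` implies `g(S) - x ∈ S`. -/
def IsSymm {n : ℕ} (g : Fin (n + 1) → ℕ) : Prop :=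
  ∀ x : ℤ, x ∉ SZ g → frob g - x ∈ SZ g

/-- Hypotheses: `g 0 < g 1 < ⋯ < g n` is a minimal system of generators with
gcd 1, so `S` is a numerical semigroup minimally generated by the `g i`. -/
structure MinGen {n : ℕ} (g : Fin (n + 1) → ℕ) : Prop where
  smono : StrictMono g
  minimal : ∀ i, g i ∉ AddSubmonoid.closure (Set.range g \ {g i})
  gcdeq : Finset.univ.gcd g = 1

variable (k : Type*) [Field k] {n : ℕ} (g : Fin (n + 1) → ℕ)

/-- `R = k[[t^S]]`: the subalgebra of `k[[t]]` of power series supported in `S`. -/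
def Rsub : Subalgebra k (PowerSeries k) where
  carrier := {f | ∀ i, PowerSeries.coeff i f ≠ 0 → i ∈ S g}
  zero_mem' := by intro i hi; simp at hi
  one_mem' := by
    intro i hi
    by_cases h : i = 0
    · exact h ▸ (S g).zero_mem
    · rw [PowerSeries.coeff_one, if_neg h] at hi; exact absurd rfl hi
  add_mem' := by
    intro a b ha hb i hi
    rw [map_add] at hi
    by_cases h : PowerSeries.coeff i a ≠ 0
    · exact ha i h
    · push_neg at h
      rw [h, zero_add] at hi
      exact hb i hi
  mul_mem' := by
    intro a b ha hb i hi
    rw [PowerSeries.coeff_mul] at hi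
    obtain ⟨p, hp, hne⟩ := Finset.exists_ne_zero_of_sum_ne_zero hi
    have h1 := ha p.1 (left_ne_zero_of_mul hne)
    have h2 := hb p.2 (right_ne_zero_of_mul hne)
    exact (Finset.HasAntidiagonal.mem_antidiagonal.mp hp) ▸ add_mem h1 h2
  algebraMap_mem' := by
    intro r i hi
    by_cases h : i = 0
    · exact h ▸ (S g).zero_mem
    · exfalso
      apply hi
      have : (algebraMap k (PowerSeries k)) r = PowerSeries.C r := rfl
      rw [this, PowerSeries.coeff_C, if_neg h]

open Classical in
/-- `t^s` as an element of `R` (defined to be `0` if `s ∉ S`). -/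
def tR (s : ℕ) : Rsub k g :=
  if h : s ∈ S g then
    ⟨PowerSeries.monomial s 1, by
      intro i hi
      rw [PowerSeries.coeff_monomial] at hi
      split at hi
      · next heq => exact heq ▸ h
      · exact absurd rfl hi⟩
  else 0

/-- `m = (t^{g_1}, …, t^{g_n})`, the maximal ideal of `R`. -/
def mI : Ideal (Rsub k g) := Ideal.span (Set.range fun i => tR k g (g i))

lemma tR_mul {s u : ℕ} (hs : s ∈ S g) (hu : u ∈ S g) :
    tR k g (s + u) = tR k g s * tR k g u := by
  simp only [tR, dif_pos hs, dif_pos hu, dif_pos (add_mem hs hu)]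
  apply Subtype.ext
  simp only [MulMemClass.coe_mul]
  show (PowerSeries.monomial (s + u)) (1 : k) =
    (PowerSeries.monomial s) 1 * (PowerSeries.monomial u) 1
  rw [← PowerSeries.X_pow_eq, ← PowerSeries.X_pow_eq, ← PowerSeries.X_pow_eq, pow_add]

lemma setM_subset : ∀ h : ℕ, setM g h ⊆ (S g : Set ℕ) := by
  intro h
  induction h with
  | zero => exact fun s hs => hs
  | succ h ih =>
    rintro s ⟨u, hu, v, hv, huv⟩
    have : u + v = s := huv
    exact this ▸ add_mem hu.1 (ih hv)

lemma le_of_mem_setM : ∀ h : ℕ, ∀ s ∈ setM g h, h ≤ s := by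
  intro h
  induction h with
  | zero => exact fun s _ => Nat.zero_le s
  | succ h ih =>
    rintro s ⟨u, hu, v, hv, huv⟩
    have hsum : u + v = s := huv
    have h1 : 1 ≤ u := Nat.one_le_iff_ne_zero.mpr hu.2
    have h2 := ih v hv
    omega

lemma tR_mem_mI {u : ℕ} (hu : u ∈ S g) (hne : u ≠ 0) : tR k g u ∈ mI k g := by
  have key : ∀ (x : ℕ) (_ : x ∈ S g), x = 0 ∨ tR k g x ∈ mI k g := by
    intro x hx
    induction hx using AddSubmonoid.closure_induction with
    | mem y hy =>
      obtain ⟨i, rfl⟩ := hy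
      exact Or.inr (Ideal.subset_span ⟨i, rfl⟩)
    | zero => exact Or.inl rfl
    | add x y hx hy px py =>
      rcases px with rfl | px
      · rcases py with rfl | py
        · exact Or.inl rfl
        · exact Or.inr (by rwa [zero_add])
      · refine Or.inr ?_
        rw [tR_mul k g hx hy]
        exact Ideal.mul_mem_right _ _ px
  rcases key u hu with rfl | h
  · exact absurd rfl hne
  · exact h

lemma tR_mem_pow_of_setM : ∀ h : ℕ, ∀ s ∈ setM g h, tR k g s ∈ (mI k g) ^ h := by
  intro h
  induction h with
  | zero =>
    intro s _
    rw [pow_zero, Ideal.one_eq_top]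
    exact Submodule.mem_top
  | succ h ih =>
    rintro s ⟨u, hu, v, hv, huv⟩
    have hsum : u + v = s := huv
    rw [← hsum, tR_mul k g hu.1 (setM_subset g h hv), pow_succ, mul_comm (tR k g u)]
    exact Ideal.mul_mem_mul (ih v hv) (tR_mem_mI k g hu.1 hu.2)

lemma mem_setM_ordS {s : ℕ} (hs : s ∈ S g) : s ∈ setM g (ordS g s) := by
  have : ordS g s ∈ {h | s ∈ setM g h} :=
    Nat.sSup_mem (⟨0, hs⟩ : Set.Nonempty {h | s ∈ setM g h})
      ⟨s, fun h hh => le_of_mem_setM g h s hh⟩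
  exact this

lemma tR_mem_pow (s : ℕ) : tR k g s ∈ (mI k g) ^ (ordS g s) := by
  by_cases hs : s ∈ S g
  · exact tR_mem_pow_of_setM k g _ s (mem_setM_ordS g hs)
  · rw [tR, dif_neg hs]
    exact zero_mem _

/-- `G(m) = ⊕_{h ≥ 0} m^h/m^{h+1}`, realized as the Rees algebra `R[mt]`
modulo the extension of `m` (the standard presentation of the associated
graded ring of a local ring). -/
abbrev grG : Type _ :=
  (reesAlgebra (mI k g)) ⧸
    (Ideal.map (algebraMap (Rsub k g) (reesAlgebra (mI k g))) (mI k g))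

/-- The homogeneous maximal ideal `𝓜 = m/m² ⊕ m²/m³ ⊕ ⋯` of `G(m)`: the image
of the ideal of elements of the Rees algebra whose degree-0 coefficient lies
in `m`. -/
def MM : Ideal (grG k g) :=
  Ideal.map (Ideal.Quotient.mk _)
    (Ideal.comap ((Polynomial.evalRingHom (0 : Rsub k g)).comp
      (reesAlgebra (mI k g)).val.toRingHom) (mI k g))

/-- The reduction number `r` of `m`: the least `r` with `m^{r+1} = t^{g_1}·m^r`. -/
def rnum : ℕ :=
  sInf {j | (mI k g) ^ (j + 1) = Ideal.span {tR k g (g 0)} * (mI k g) ^ j}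

/-- The initial form `t^s*` of `t^s` in `G(m)`, i.e. the image of `t^s` in
`m^{ord(s)}/m^{ord(s)+1}` (the degree-`ord(s)` component of `G(m)`). -/
def tstar (s : ℕ) : grG k g :=
  Ideal.Quotient.mk _
    ⟨(Polynomial.monomial (ordS g s)) (tR k g s),
      reesAlgebra.monomial_mem.mpr (tR_mem_pow k g s)⟩

/-- `(0 :_{G(m)} 𝓜^r) = H⁰_𝓜(G(m))`. -/
def annM : Ideal (grG k g) := Submodule.colon ⊥ ((MM k g ^ rnum k g : Ideal (grG k g)) : Set (grG k g))

/-- `(0 :_{G(m)} 𝓜)`. -/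
def ann1 : Ideal (grG k g) := Submodule.colon ⊥ (MM k g : Set (grG k g))

/-- `G(m)` is Buchsbaum iff `(0 :_{G(m)} 𝓜) = (0 :_{G(m)} 𝓜^r)`. -/
def IsBuchsbaum : Prop := ann1 k g = annM k g

/-- `G(m)` is Cohen-Macaulay iff `(0 :_{G(m)} 𝓜^r) = 0`. -/
def IsCM : Prop := annM k g = ⊥

/-- `l_i = max { l | t^{ω_i + l g_1}* ∈ (0 :_{G(m)} 𝓜^r) }`. -/
def lℓ (i : ℕ) : ℕ := sSup {l | tstar k g (ap g i + l * g 0) ∈ annM k g}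

/-- The length of a `G(m)`-module: the Krull dimension of its lattice of
submodules, i.e. the longest length of a chain of submodules. -/
def lenOf (M : Type*) [AddCommGroup M] [Module (grG k g) M] : WithBot ℕ∞ :=
  Order.krullDim (Submodule (grG k g) M)

/-- The socle `(0 :_{G/ξG} 𝓜) = ((ξ) :_G 𝓜)/(ξ)` of `G(m)/ξ·G(m)`, where
`ξ = t^{g_1}*` is the canonical degree-one homogeneous parameter of `G(m)`. -/
abbrev socQ : Type _ :=
  ↥(Submodule.colon (Ideal.span {tstar k g (g 0)}) (MM k g)) ⧸
    (Submodule.comap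
      (Submodule.colon (Ideal.span {tstar k g (g 0)}) (MM k g)).subtype
      (Ideal.span {tstar k g (g 0)}))

/-- `G(m)` is Gorenstein: Cohen-Macaulay of type 1, i.e. Cohen-Macaulay and
the socle of `G(m)` modulo the homogeneous parameter `ξ = t^{g_1}*` has
length 1 as a `G(m)`-module. -/
def IsGor : Prop := IsCM k g ∧ lenOf k g (socQ k g) = 1

/-!
Write `x_l = ω_i + l g₁`. Translating to monomials, `t^z ∈ m^E` iff `z ∈ E M`, so `t^x*`
lies in `(0 : 𝓜^r)` iff `x + w ∈ (ord x + r + 1) M` for all `w ∈ r M`. Beyond the reduction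
number `t^{g₁}` can be cancelled from such memberships, so torsion descends along
multiplication by `t^{g₁}*`: if `t^{x_l}*` is torsion, so are `t^{x_0}*, …, t^{x_l}*`. In a
Buchsbaum `G(m)` each of them is killed by `t^{g₁}* ∈ 𝓜`, i.e. the order jumps by at least two
from `x_j` to `x_{j+1}`, so `ord x_{l+1} ≥ b_i + 2(l + 1)`. Comparing with the blow-up gives
`ord x_{l+1} ≤ a_i + l + 1`, hence `l < a_i - b_i`.
-/

section AssociatedGraded

variable {R : Type*} [CommRing R] (I : Ideal R)

/-- `grG k g` and `MM k g` are `assocGraded (mI k g)` and `irrelevant (mI k g)`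
definitionally. -/
abbrev assocGraded : Type _ := reesAlgebra I ⧸ I.map (algebraMap R (reesAlgebra I))

open Classical in
/-- The class of `f T^D` in `assocGraded I`; junk value `0` when `f ∉ I ^ D`. -/
def initialForm (D : ℕ) (f : R) : assocGraded I :=
  if h : f ∈ I ^ D then Ideal.Quotient.mk _ ⟨monomial D f, reesAlgebra.monomial_mem.mpr h⟩
  else 0

def irrelevant : Ideal (assocGraded I) :=
  Ideal.map (Ideal.Quotient.mk _)
    (Ideal.comap ((evalRingHom (0 : R)).comp (reesAlgebra I).val.toRingHom) I)

variable {I}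

lemma initialForm_of_mem {D : ℕ} {f : R} (hf : f ∈ I ^ D) :
    initialForm I D f = Ideal.Quotient.mk _ ⟨monomial D f, reesAlgebra.monomial_mem.mpr hf⟩ :=
  dif_pos hf

lemma initialForm_mul {D E : ℕ} {f f' : R} (hf : f ∈ I ^ D) (hf' : f' ∈ I ^ E) :
    initialForm I D f * initialForm I E f' = initialForm I (D + E) (f * f') := by
  have hff' : f * f' ∈ I ^ (D + E) := pow_add I D E ▸ Ideal.mul_mem_mul hf hf'
  rw [initialForm_of_mem hf, initialForm_of_mem hf', initialForm_of_mem hff', ← map_mul]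
  congr 1
  exact Subtype.ext (monomial_mul_monomial D E f f')

lemma initialForm_add {D : ℕ} {f f' : R} (hf : f ∈ I ^ D) (hf' : f' ∈ I ^ D) :
    initialForm I D (f + f') = initialForm I D f + initialForm I D f' := by
  rw [initialForm_of_mem hf, initialForm_of_mem hf', initialForm_of_mem (add_mem hf hf'),
    ← map_add]
  congr 1
  exact Subtype.ext (map_add (monomial D) f f')

lemma coeff_mem_pow_succ_of_mem_map {F : reesAlgebra I}
    (hF : F ∈ I.map (algebraMap R (reesAlgebra I))) (d : ℕ) :
    (F : R[X]).coeff d ∈ I ^ (d + 1) := by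
  induction hF using Submodule.span_induction generalizing d with
  | mem x hx =>
    obtain ⟨a, ha, rfl⟩ := hx
    change (C a).coeff d ∈ _
    rw [coeff_C]
    split_ifs with hd
    · simpa [hd] using ha
    · exact zero_mem _
  | zero => exact zero_mem _
  | add x y _ _ hx hy => exact add_mem (hx d) (hy d)
  | smul r x _ hx =>
    change ((r : R[X]) * x).coeff d ∈ _
    rw [coeff_mul]
    refine sum_mem fun pq hpq => ?_
    rw [← Finset.HasAntidiagonal.mem_antidiagonal.mp hpq, add_assoc, pow_add]
    exact Ideal.mul_mem_mul (r.2 pq.1) (hx pq.2)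

lemma mem_map_of_coe_eq_monomial {D : ℕ} {f : R} (hf : f ∈ I ^ (D + 1)) {F : reesAlgebra I}
    (hF : (F : R[X]) = monomial D f) : F ∈ I.map (algebraMap R (reesAlgebra I)) := by
  rw [pow_succ'] at hf
  refine Submodule.mul_induction_on'
    (C := fun f _ => ∀ F : reesAlgebra I, (F : R[X]) = monomial D f → F ∈ _) ?_ ?_ hf F hF
  · intro a ha b hb F hF
    have : F = algebraMap R (reesAlgebra I) a *
        ⟨monomial D b, reesAlgebra.monomial_mem.mpr hb⟩ :=
      Subtype.ext (hF.trans C_mul_monomial.symm)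
    rw [this]
    exact Ideal.mul_mem_right _ _ (Ideal.mem_map_of_mem _ ha)
  · intro x hx y hy ihx ihy F hF
    have hx' : x ∈ I ^ D := Ideal.mul_le_right hx
    have hy' : y ∈ I ^ D := Ideal.mul_le_right hy
    have : F = ⟨monomial D x, reesAlgebra.monomial_mem.mpr hx'⟩ +
        ⟨monomial D y, reesAlgebra.monomial_mem.mpr hy'⟩ :=
      Subtype.ext (by rw [hF, map_add]; rfl)
    rw [this]
    exact add_mem (ihx _ rfl) (ihy _ rfl)

lemma initialForm_eq_zero_iff {D : ℕ} {f : R} (hf : f ∈ I ^ D) :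
    initialForm I D f = 0 ↔ f ∈ I ^ (D + 1) := by
  rw [initialForm_of_mem hf, Ideal.Quotient.eq_zero_iff_mem]
  exact ⟨fun h => by simpa using coeff_mem_pow_succ_of_mem_map h D,
    fun h => mem_map_of_coe_eq_monomial h rfl⟩

lemma initialForm_zero (D : ℕ) : initialForm I D 0 = 0 :=
  (initialForm_eq_zero_iff (zero_mem _)).mpr (zero_mem _)

lemma initialForm_zero_one : initialForm I 0 1 = 1 := by
  rw [initialForm_of_mem (by simp), ← map_one (Ideal.Quotient.mk _)]
  exact congrArg _ (Subtype.ext monomial_zero_one)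

lemma initialForm_mem_pow {J : Ideal (assocGraded I)} (hJ : ∀ b ∈ I, initialForm I 1 b ∈ J) :
    ∀ {d : ℕ} {f : R}, f ∈ I ^ d → initialForm I d f ∈ J ^ d
  | 0, _, _ => by rw [Submodule.pow_zero, Ideal.one_eq_top]; trivial
  | d + 1, f, hf => by
    rw [pow_succ] at hf
    refine Submodule.mul_induction_on' (C := fun f _ => initialForm I (d + 1) f ∈ J ^ (d + 1))
      (fun a ha b hb => ?_) (fun x hx y hy ihx ihy => ?_) hf
    · rw [← initialForm_mul ha (by rwa [pow_one]), Submodule.pow_succ]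
      exact Ideal.mul_mem_mul (initialForm_mem_pow hJ ha) (hJ b hb)
    · rw [initialForm_add (pow_succ I d ▸ hx) (pow_succ I d ▸ hy)]
      exact add_mem ihx ihy

lemma initialForm_one_mem_irrelevant {b : R} (hb : b ∈ I) : initialForm I 1 b ∈ irrelevant I := by
  rw [initialForm_of_mem (by rwa [pow_one])]
  refine Ideal.mem_map_of_mem _ ?_
  simp [Ideal.mem_comap]

lemma initialForm_one_mem_span {s : Set R} (hs : Ideal.span s = I) {b : R} (hb : b ∈ I) :
    initialForm I 1 b ∈ Ideal.span (initialForm I 1 '' s) := by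
  have hI : ∀ x ∈ Ideal.span s, x ∈ I ^ 1 := fun x hx => by rwa [pow_one, ← hs]
  rw [← hs] at hb
  induction hb using Submodule.span_induction with
  | mem x hx => exact Ideal.subset_span ⟨x, hx, rfl⟩
  | zero => rw [initialForm_zero]; exact zero_mem _
  | add x y hx hy ihx ihy =>
    rw [initialForm_add (hI x hx) (hI y hy)]
    exact add_mem ihx ihy
  | smul a x hx ihx =>
    have := initialForm_mul (D := 0) (f := a) (by simp) (hI x hx)
    rw [zero_add] at this
    rw [smul_eq_mul, ← this]
    exact Ideal.mul_mem_left _ _ ihx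

lemma irrelevant_le_span {s : Set R} (hs : Ideal.span s = I) :
    irrelevant I ≤ Ideal.span (initialForm I 1 '' s) := by
  rw [irrelevant, Ideal.map_le_iff_le_comap]
  intro F hF
  have hF0 : (F : R[X]).coeff 0 ∈ I := by simpa [coeff_zero_eq_eval_zero] using hF
  have hsum : F = ∑ d ∈ (F : R[X]).support,
      (⟨monomial d ((F : R[X]).coeff d), reesAlgebra.monomial_mem.mpr (F.2 d)⟩ : reesAlgebra I) :=
    Subtype.ext (by rw [AddSubmonoidClass.coe_finsetSum]; exact as_sum_support _)
  rw [Ideal.mem_comap, hsum, map_sum]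
  refine sum_mem fun d _ => ?_
  rcases d.eq_zero_or_pos with rfl | hd
  · change Ideal.Quotient.mk _ (algebraMap R (reesAlgebra I) ((F : R[X]).coeff 0)) ∈ _
    rw [ Ideal.Quotient.eq_zero_iff_mem.mpr (Ideal.mem_map_of_mem _ hF0)]
    exact zero_mem _
  · rw [← initialForm_of_mem (F.2 d)]
    exact Ideal.pow_le_self hd.ne'
      (initialForm_mem_pow (fun _ hb => initialForm_one_mem_span hs hb) (F.2 d))

lemma image_initialForm_pow_subset {s : Set R} (hs : s ⊆ I) :
    ∀ r : ℕ, (initialForm I 1 '' s) ^ r ⊆ initialForm I r '' s ^ r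
  | 0 => by simp [initialForm_zero_one]
  | r + 1 => by
    rw [pow_succ]
    rintro _ ⟨_, hx, _, ⟨q, hq, rfl⟩, rfl⟩
    obtain ⟨p, hp, rfl⟩ := image_initialForm_pow_subset hs r hx
    have hpI : p ∈ I ^ r := Submodule.pow_subset_pow I (Set.pow_subset_pow_left hs hp)
    have hqI : q ∈ I ^ 1 := by rw [pow_one]; exact hs hq
    exact ⟨p * q, Set.mul_mem_mul hp hq, (initialForm_mul hpI hqI).symm⟩

lemma irrelevant_pow_le_span {s : Set R} (hs : Ideal.span s = I) (r : ℕ) :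
    irrelevant I ^ r ≤ Ideal.span (initialForm I r '' s ^ r) :=
  calc irrelevant I ^ r ≤ Ideal.span (initialForm I 1 '' s) ^ r :=
        Ideal.pow_right_mono (irrelevant_le_span hs) r
    _ = Ideal.span ((initialForm I 1 '' s) ^ r) := Submodule.span_pow (R := assocGraded I) _ r
    _ ≤ Ideal.span (initialForm I r '' s ^ r) :=
        Ideal.span_mono (image_initialForm_pow_subset (hs ▸ Ideal.subset_span) r)

lemma mem_colon_irrelevant_pow_of_mul_initialForm_eq_zero {s : Set R} (hs : Ideal.span s = I)
    {r : ℕ} {y : assocGraded I} (hy : ∀ p ∈ s ^ r, y * initialForm I r p = 0) :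
    y ∈ Submodule.colon ⊥ ((irrelevant I ^ r : Ideal (assocGraded I)) : Set (assocGraded I)) := by
  rw [Submodule.mem_colon]
  intro q hq
  rw [Submodule.mem_bot, smul_eq_mul]
  replace hq := irrelevant_pow_le_span hs r hq
  induction hq using Submodule.span_induction with
  | mem x hx => obtain ⟨p, hp, rfl⟩ := hx; exact hy p hp
  | zero => exact mul_zero y
  | add x z _ _ hx hz => rw [mul_add, hx, hz, add_zero]
  | smul a x _ hx => rw [smul_eq_mul, show y * (a * x) = a * (y * x) by ring, hx, mul_zero]

end AssociatedGraded

section Semigroup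

variable {g}

lemma gen_mem_S (t : Fin (n + 1)) : g t ∈ S g := AddSubmonoid.subset_closure ⟨t, rfl⟩

lemma MinGen.g_zero_le (hg : MinGen g) (t : Fin (n + 1)) : g 0 ≤ g t :=
  hg.smono.monotone (Fin.zero_le t)

lemma MinGen.g_zero_pos (hg : MinGen g) : 0 < g 0 :=
  Nat.pos_of_ne_zero fun h0 => hg.minimal 0 (by rw [h0]; exact zero_mem _)

lemma MinGen.ne_zero (hg : MinGen g) (t : Fin (n + 1)) : g t ≠ 0 :=
  (hg.g_zero_pos.trans_le (hg.g_zero_le t)).ne'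

lemma add_mem_setM_succ {u z h : ℕ} (hu : u ∈ S g) (hu0 : u ≠ 0) (hz : z ∈ setM g h) :
    u + z ∈ setM g (h + 1) :=
  Set.add_mem_add ⟨hu, hu0⟩ hz

lemma mem_S_iff_multiset {z : ℕ} :
    z ∈ S g ↔ ∃ m : Multiset (Fin (n + 1)), (m.map g).sum = z := by
  refine ⟨fun hz => ?_, ?_⟩
  · induction hz using AddSubmonoid.closure_induction with
    | mem _ hy => obtain ⟨t, rfl⟩ := hy; exact ⟨{t}, by simp⟩
    | zero => exact ⟨0, rfl⟩
    | add _ _ _ _ hx hy =>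
      obtain ⟨mx, rfl⟩ := hx
      obtain ⟨my, rfl⟩ := hy
      exact ⟨mx + my, by simp⟩
  · rintro ⟨m, rfl⟩
    exact multiset_sum_mem _ fun _ hy => by
      obtain ⟨t, -, rfl⟩ := Multiset.mem_map.mp hy
      exact gen_mem_S t

lemma mem_setM_iff (hg : MinGen g) {h z : ℕ} :
    z ∈ setM g h ↔ ∃ m : Multiset (Fin (n + 1)), h ≤ Multiset.card m ∧ (m.map g).sum = z := by
  induction h generalizing z with
  | zero => simpa [setM] using mem_S_iff_multiset
  | succ h ih =>
    constructor
    · rintro ⟨u, ⟨hu, hu0⟩, v, hv, rfl⟩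
      obtain ⟨mu, rfl⟩ := mem_S_iff_multiset.mp hu
      obtain ⟨mv, hcard, rfl⟩ := ih.mp hv
      have hmu : 0 < Multiset.card mu := Multiset.card_pos.mpr (by rintro rfl; exact hu0 rfl)
      refine ⟨mu + mv, ?_, by simp⟩
      simp only [Multiset.card_add]
      omega
    · rintro ⟨m, hcard, rfl⟩
      obtain ⟨t, ht⟩ := Multiset.card_pos_iff_exists_mem.mp (by omega : 0 < Multiset.card m)
      obtain ⟨m', rfl⟩ := Multiset.exists_cons_of_mem ht
      rw [Multiset.map_cons, Multiset.sum_cons]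
      refine add_mem_setM_succ (gen_mem_S t) (hg.ne_zero t) (ih.mpr ⟨m', ?_, rfl⟩)
      simp only [Multiset.card_cons] at hcard
      omega

lemma setM_subset_setM (hg : MinGen g) {h h' : ℕ} (hle : h' ≤ h) : setM g h ⊆ setM g h' := by
  intro z hz
  obtain ⟨m, hcard, rfl⟩ := (mem_setM_iff hg).mp hz
  exact (mem_setM_iff hg).mpr ⟨m, hle.trans hcard, rfl⟩

lemma le_ordS {z h : ℕ} (hz : z ∈ setM g h) : h ≤ ordS g z :=
  le_csSup ⟨z, fun h hh => le_of_mem_setM g h z hh⟩ hz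

lemma ordS_add_g_zero (hg : MinGen g) {z : ℕ} (hz : z ∈ S g) :
    ordS g z + 1 ≤ ordS g (z + g 0) :=
  le_ordS (add_comm (g 0) z ▸
    add_mem_setM_succ (gen_mem_S 0) (hg.ne_zero 0) (mem_setM_ordS g hz))

lemma g_zero_mem_setM_one (hg : MinGen g) : g 0 ∈ setM g 1 :=
  add_zero (g 0) ▸ add_mem_setM_succ (gen_mem_S 0) (hg.ne_zero 0) (zero_mem (S g))

/-- Pigeonhole: if `0 ∉ m`, some `j ≠ 0` occurs more than `g 0` times in `m`, and `g 0` copies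
of `j` can be traded for `g j ≥ g 0` copies of `0`. -/
lemma exists_multiset_zero_mem (hg : MinGen g) {m : Multiset (Fin (n + 1))}
    (hm : n * g 0 < Multiset.card m) :
    ∃ m' : Multiset (Fin (n + 1)), 0 ∈ m' ∧ Multiset.card m ≤ Multiset.card m' ∧
      (m'.map g).sum = (m.map g).sum := by
  classical
  by_cases h0 : 0 ∈ m
  · exact ⟨m, h0, le_rfl, rfl⟩
  obtain ⟨j, hj, hjm⟩ : ∃ j ∈ Finset.univ.erase 0, g 0 < m.count j := by
    refine Finset.exists_lt_of_sum_lt ?_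
    have hm0 : ∀ a ∈ m, a ∈ Finset.univ.erase 0 := fun a ha =>
      Finset.mem_erase.mpr ⟨by rintro rfl; exact h0 ha, Finset.mem_univ a⟩
    rw [Multiset.sum_count_eq_card hm0, Finset.sum_const,
      Finset.card_erase_of_mem (Finset.mem_univ 0), Finset.card_univ, Fintype.card_fin, smul_eq_mul]
    simpa using hm
  obtain ⟨rest, rfl⟩ := Multiset.le_iff_exists_add.mp
    (Multiset.le_count_iff_replicate_le.mp hjm.le)
  refine ⟨Multiset.replicate (g j) 0 + rest, ?_, ?_, ?_⟩
  · exact Multiset.mem_add.mpr (Or.inl (Multiset.mem_replicate.mpr ⟨hg.ne_zero j, rfl⟩))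
  · simpa using hg.g_zero_le j
  · simp [Multiset.map_replicate, mul_comm]

lemma exists_eq_g_zero_add (hg : MinGen g) {z : ℕ} (hz : z ∈ setM g (n * g 0 + 1)) :
    ∃ z' ∈ setM g (n * g 0), z = g 0 + z' := by
  obtain ⟨m, hcard, rfl⟩ := (mem_setM_iff hg).mp hz
  obtain ⟨m', h0, hcard', hsum⟩ := exists_multiset_zero_mem hg hcard
  obtain ⟨m'', rfl⟩ := Multiset.exists_cons_of_mem h0
  refine ⟨(m''.map g).sum, (mem_setM_iff hg).mpr ⟨m'', ?_, rfl⟩, by simp [← hsum]⟩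
  simp only [Multiset.card_cons] at hcard'
  omega

lemma sum_map_eq_sum_map_sub_add (hg : MinGen g) (m : Multiset (Fin (n + 1))) :
    (m.map g).sum = (m.map fun t => g t - g 0).sum + Multiset.card m * g 0 := by
  induction m using Multiset.induction with
  | empty => simp
  | cons t m ih =>
    simp only [Multiset.map_cons, Multiset.sum_cons, Multiset.card_cons, ih, add_mul, one_mul]
    have := hg.g_zero_le t
    omega

lemma exists_mem_S'_eq_add_mul (hg : MinGen g) {z h : ℕ} (hz : z ∈ setM g h) :
    ∃ y ∈ S' g, z = y + h * g 0 := by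
  obtain ⟨m, hcard, rfl⟩ := (mem_setM_iff hg).mp hz
  refine ⟨(m.map fun t => g t - g 0).sum + (Multiset.card m - h) * g 0, add_mem ?_ ?_, ?_⟩
  · refine multiset_sum_mem _ fun _ hy => ?_
    obtain ⟨t, -, rfl⟩ := Multiset.mem_map.mp hy
    exact AddSubmonoid.subset_closure (Set.mem_insert_of_mem _ ⟨t, rfl⟩)
  · rw [← smul_eq_mul]
    exact nsmul_mem (AddSubmonoid.subset_closure (Set.mem_insert _ _)) _
  · rw [sum_map_eq_sum_map_sub_add hg, add_assoc, ← add_mul, Nat.sub_add_cancel hcard]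

lemma mul_g_zero_mem (l : ℕ) : l * g 0 ∈ S g := by
  rw [← smul_eq_mul]
  exact nsmul_mem (gen_mem_S 0) l

lemma exists_mem_S_mod (hg : MinGen g) (i : ℕ) : ∃ s ∈ S g, s % g 0 = i % g 0 := by
  have hgcd : Nat.setGcd (Set.range g) ∣ Finset.univ.gcd g :=
    Finset.dvd_gcd fun t _ => Nat.setGcd_dvd_of_mem ⟨t, rfl⟩
  rw [hg.gcdeq] at hgcd
  obtain ⟨N, hN⟩ := Nat.exists_mem_closure_of_ge (Set.range g)
  refine ⟨N * g 0 + i, hN _ ?_ (hgcd.trans (one_dvd _)), by simp [Nat.add_mod]⟩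
  have := hg.g_zero_pos
  nlinarith

lemma ap_mem_S_mod (hg : MinGen g) {i : ℕ} (hi : i < g 0) :
    ap g i ∈ S g ∧ ap g i % g 0 = i := by
  obtain ⟨s, hs, hsi⟩ := exists_mem_S_mod hg i
  exact Nat.sInf_mem (s := {s | s ∈ S g ∧ s % g 0 = i})
    ⟨s, hs, hsi.trans (Nat.mod_eq_of_lt hi)⟩

/-- Comparing with the blow-up: `ω_i + l g₁ = y + h g₁` with `y ∈ S'`, `y ≡ i`, forces
`ω'_i ≤ y`, hence `h ≤ a_i + l`. -/
lemma ordS_ap_add_mul_le (hg : MinGen g) {i : ℕ} (hi : i < g 0) (l : ℕ) :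
    ordS g (ap g i + l * g 0) ≤ aa g i + l := by
  obtain ⟨hapS, hapi⟩ := ap_mem_S_mod hg hi
  have hx := mem_setM_ordS g (add_mem hapS (mul_g_zero_mem l))
  generalize ordS g (ap g i + l * g 0) = h at hx ⊢
  obtain ⟨y, hyS', hy⟩ := exists_mem_S'_eq_add_mul hg hx
  have hyi : y % g 0 = i := by
    rw [← hapi, ← Nat.add_mul_mod_self_right (ap g i) l, hy, Nat.add_mul_mod_self_right]
  have hap' : ap' g i ≤ y := Nat.sInf_le ⟨hyS', hyi⟩
  have : (h - l) * g 0 ≤ ap g i - ap' g i := by rw [Nat.sub_mul]; omega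
  have := (Nat.le_div_iff_mul_le hg.g_zero_pos).mpr this
  unfold aa
  omega

end Semigroup

section PowerSeries

variable {R : Type*} [Semiring R] {φ ψ : PowerSeries R} {c : ℕ}

lemma _root_.PowerSeries.exists_add_eq_of_coeff_mul_ne_zero
    (h : PowerSeries.coeff c (φ * ψ) ≠ 0) :
    ∃ a b, a + b = c ∧ PowerSeries.coeff a φ ≠ 0 ∧ PowerSeries.coeff b ψ ≠ 0 := by
  rw [PowerSeries.coeff_mul] at h
  obtain ⟨⟨a, b⟩, hab, hne⟩ := Finset.exists_ne_zero_of_sum_ne_zero h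
  exact ⟨a, b, Finset.HasAntidiagonal.mem_antidiagonal.mp hab, left_ne_zero_of_mul hne,
    right_ne_zero_of_mul hne⟩

lemma _root_.PowerSeries.coeff_ne_zero_or_of_coeff_add_ne_zero
    (h : PowerSeries.coeff c (φ + ψ) ≠ 0) :
    PowerSeries.coeff c φ ≠ 0 ∨ PowerSeries.coeff c ψ ≠ 0 := by
  contrapose! h
  simp [h.1, h.2]

end PowerSeries

section SemigroupRing

variable {g}

lemma tR_coe {s : ℕ} (hs : s ∈ S g) :
    (tR k g s : PowerSeries k) = PowerSeries.monomial s 1 := by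
  rw [tR, dif_pos hs]

lemma tR_zero : tR k g 0 = 1 :=
  Subtype.ext ((tR_coe k (zero_mem _)).trans (PowerSeries.monomial_zero_eq_C_apply 1))

lemma mem_M_of_coeff_ne_zero_of_mem_mI (hg : MinGen g) {a : Rsub k g} (ha : a ∈ mI k g)
    {c : ℕ} (hc : PowerSeries.coeff c (a : PowerSeries k) ≠ 0) : c ∈ S g ∧ c ≠ 0 := by
  induction ha using Submodule.span_induction generalizing c with
  | mem x hx =>
    obtain ⟨t, rfl⟩ := hx
    rw [tR_coe k (gen_mem_S t), PowerSeries.coeff_monomial] at hc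
    obtain rfl : c = g t := by by_contra h; exact hc (if_neg h)
    exact ⟨gen_mem_S t, hg.ne_zero t⟩
  | zero => exact absurd (map_zero _) hc
  | add x y _ _ hx hy =>
    exact (PowerSeries.coeff_ne_zero_or_of_coeff_add_ne_zero hc).elim hx hy
  | smul r x _ hx =>
    obtain ⟨a, b, rfl, ha, hb⟩ := PowerSeries.exists_add_eq_of_coeff_mul_ne_zero hc
    obtain ⟨hbS, hb0⟩ := hx hb
    exact ⟨add_mem (r.2 a ha) hbS, by omega⟩

lemma mem_setM_of_coeff_ne_zero_of_mem_mI_pow (hg : MinGen g) {E : ℕ} {f : Rsub k g}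
    (hf : f ∈ mI k g ^ E) {c : ℕ} (hc : PowerSeries.coeff c (f : PowerSeries k) ≠ 0) :
    c ∈ setM g E := by
  induction E generalizing f c with
  | zero => exact f.2 c hc
  | succ E ih =>
    rw [pow_succ'] at hf
    refine Submodule.mul_induction_on (C := fun f : Rsub k g =>
      ∀ {c}, PowerSeries.coeff c (f : PowerSeries k) ≠ 0 → c ∈ setM g (E + 1)) hf ?_ ?_ hc
    · intro a ha b hb c hc
      obtain ⟨a', b', rfl, ha', hb'⟩ := PowerSeries.exists_add_eq_of_coeff_mul_ne_zero hc
      obtain ⟨haS, ha0⟩ := mem_M_of_coeff_ne_zero_of_mem_mI k hg ha ha'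
      exact add_mem_setM_succ haS ha0 (ih hb hb')
    · intro x y hx hy c hc
      exact (PowerSeries.coeff_ne_zero_or_of_coeff_add_ne_zero hc).elim hx hy

lemma tR_mem_mI_pow_iff (hg : MinGen g) {z E : ℕ} (hz : z ∈ S g) :
    tR k g z ∈ mI k g ^ E ↔ z ∈ setM g E := by
  refine ⟨fun h => ?_, tR_mem_pow_of_setM k g E z⟩
  exact mem_setM_of_coeff_ne_zero_of_mem_mI_pow k hg h (by simp [tR_coe k hz])

lemma range_tR_pow_subset (hg : MinGen g) :
    ∀ r : ℕ, (Set.range fun t => tR k g (g t)) ^ r ⊆ tR k g '' setM g r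
  | 0 => by simpa using ⟨0, zero_mem (S g), tR_zero k⟩
  | r + 1 => by
    rw [pow_succ]
    rintro _ ⟨_, hp, _, ⟨t, rfl⟩, rfl⟩
    obtain ⟨w, hw, rfl⟩ := range_tR_pow_subset hg r hp
    refine ⟨g t + w, add_mem_setM_succ (gen_mem_S t) (hg.ne_zero t) hw, ?_⟩
    rw [add_comm, tR_mul k g (setM_subset g r hw) (gen_mem_S t)]

lemma mI_pow_le_span (hg : MinGen g) (E : ℕ) :
    mI k g ^ E ≤ Ideal.span (tR k g '' setM g E) := by
  rw [mI, Submodule.span_pow]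
  exact Ideal.span_mono (range_tR_pow_subset k hg E)

lemma mI_pow_n_mul_g_zero_succ (hg : MinGen g) :
    mI k g ^ (n * g 0 + 1) = Ideal.span {tR k g (g 0)} * mI k g ^ (n * g 0) := by
  refine le_antisymm ((mI_pow_le_span k hg _).trans ?_) ?_
  · rw [Ideal.span_le]
    rintro _ ⟨z, hz, rfl⟩
    obtain ⟨z', hz', rfl⟩ := exists_eq_g_zero_add hg hz
    rw [tR_mul k g (gen_mem_S 0) (setM_subset g _ hz')]
    exact Ideal.mul_mem_mul (Ideal.mem_span_singleton_self _) (tR_mem_pow_of_setM k g _ _ hz')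
  · rw [pow_succ']
    refine Ideal.mul_mono_left ((Ideal.span_singleton_le_iff_mem _).mpr ?_)
    exact tR_mem_mI k g (gen_mem_S 0) (hg.ne_zero 0)

lemma mI_pow_succ_eq_span_mul_pow (hg : MinGen g) {h : ℕ} (hh : rnum k g ≤ h) :
    mI k g ^ (h + 1) = Ideal.span {tR k g (g 0)} * mI k g ^ h := by
  induction h, hh using Nat.le_induction with
  | base =>
    exact Nat.sInf_mem (s := {j | mI k g ^ (j + 1) = Ideal.span {tR k g (g 0)} * mI k g ^ j})
      ⟨_, mI_pow_n_mul_g_zero_succ k hg⟩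
  | succ h _ ih =>
    conv_lhs => rw [pow_succ, ih]
    rw [mul_assoc, ← pow_succ]

lemma mem_setM_of_add_g_zero_mem (hg : MinGen g) {z h : ℕ} (hz : z ∈ S g)
    (hh : rnum k g ≤ h) (hzh : z + g 0 ∈ setM g (h + 1)) : z ∈ setM g h := by
  have hzg := (tR_mem_mI_pow_iff k hg (add_mem hz (gen_mem_S 0))).mpr hzh
  rw [mI_pow_succ_eq_span_mul_pow k hg hh] at hzg
  obtain ⟨f, hf, hfz⟩ := Ideal.mem_span_singleton_mul.mp hzg
  have hg0 : tR k g (g 0) ≠ 0 := fun h0 => by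
    simpa [tR_coe k (gen_mem_S 0)] using congrArg (PowerSeries.coeff (g 0) ∘ Subtype.val) h0
  rw [add_comm z, tR_mul k g (gen_mem_S 0) hz] at hfz
  rw [mul_left_cancel₀ hg0 hfz] at hf
  exact (tR_mem_mI_pow_iff k hg hz).mp hf

end SemigroupRing

section GradedRing

variable {g}

lemma tstar_eq_initialForm (s : ℕ) :
    tstar k g s = initialForm (mI k g) (ordS g s) (tR k g s) :=
  (initialForm_of_mem (tR_mem_pow k g s)).symm

lemma tstar_mul_initialForm_eq_zero_iff (hg : MinGen g) {x w d : ℕ} (hx : x ∈ S g)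
    (hw : w ∈ setM g d) :
    tstar k g x * initialForm (mI k g) d (tR k g w) = 0 ↔
      x + w ∈ setM g (ordS g x + d + 1) := by
  have hwS := setM_subset g d hw
  have hxw : tR k g (x + w) ∈ mI k g ^ (ordS g x + d) := by
    rw [tR_mul k g hx hwS, pow_add]
    exact Ideal.mul_mem_mul (tR_mem_pow k g x) (tR_mem_pow_of_setM k g d w hw)
  rw [tstar_eq_initialForm, initialForm_mul (tR_mem_pow k g x) (tR_mem_pow_of_setM k g d w hw),
    ← tR_mul k g hx hwS, initialForm_eq_zero_iff hxw, tR_mem_mI_pow_iff k hg (add_mem hx hwS)]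

lemma tstar_mem_annM_iff (hg : MinGen g) {x : ℕ} (hx : x ∈ S g) :
    tstar k g x ∈ annM k g ↔
      ∀ w ∈ setM g (rnum k g), x + w ∈ setM g (ordS g x + rnum k g + 1) := by
  refine ⟨fun h w hw => (tstar_mul_initialForm_eq_zero_iff k hg hx hw).mp ?_, fun h => ?_⟩
  · have hp : initialForm (mI k g) (rnum k g) (tR k g w) ∈ MM k g ^ rnum k g :=
      initialForm_mem_pow (fun _ hb => initialForm_one_mem_irrelevant hb)
        (tR_mem_pow_of_setM k g _ w hw)
    simpa using Submodule.mem_colon.mp h _ hp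
  · refine mem_colon_irrelevant_pow_of_mul_initialForm_eq_zero
      (s := Set.range fun t => tR k g (g t)) rfl fun p hp => ?_
    obtain ⟨w, hw, rfl⟩ := range_tR_pow_subset k hg _ hp
    exact (tstar_mul_initialForm_eq_zero_iff k hg hx hw).mpr (h w hw)

lemma add_g_zero_mem_setM_of_mem_ann1 (hg : MinGen g) {x : ℕ} (hx : x ∈ S g)
    (h : tstar k g x ∈ ann1 k g) : x + g 0 ∈ setM g (ordS g x + 1 + 1) := by
  refine (tstar_mul_initialForm_eq_zero_iff k hg hx (g_zero_mem_setM_one hg)).mp ?_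
  have := initialForm_one_mem_irrelevant (tR_mem_mI k g (gen_mem_S 0) (hg.ne_zero 0))
  simpa using Submodule.mem_colon.mp h _ this

lemma tstar_mem_annM_of_add_g_zero (hg : MinGen g) {x : ℕ} (hx : x ∈ S g)
    (h : tstar k g (x + g 0) ∈ annM k g) : tstar k g x ∈ annM k g := by
  rw [tstar_mem_annM_iff k hg hx]
  intro w hw
  have hxw := (tstar_mem_annM_iff k hg (add_mem hx (gen_mem_S 0))).mp h w hw
  have hord := ordS_add_g_zero hg hx
  refine mem_setM_of_add_g_zero_mem k hg (add_mem hx (setM_subset g _ hw)) (by omega) ?_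
  rw [add_right_comm x (g 0) w] at hxw
  exact setM_subset_setM hg (h := ordS g (x + g 0) + rnum k g + 1) (by omega) hxw

/-- In a Buchsbaum `G(m)` torsion is killed by `𝓜`, so `t^x* · t^{g₁}* = 0`. -/
lemma ordS_add_g_zero_of_mem_annM (hg : MinGen g) (hB : IsBuchsbaum k g) {x : ℕ}
    (hx : x ∈ S g) (h : tstar k g x ∈ annM k g) : ordS g x + 2 ≤ ordS g (x + g 0) :=
  le_ordS (add_g_zero_mem_setM_of_mem_ann1 k hg hx (hB.symm ▸ h))

lemma ordS_add_mul_g_zero_of_mem_annM (hg : MinGen g) (hB : IsBuchsbaum k g) {x : ℕ}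
    (hx : x ∈ S g) :
    ∀ l : ℕ, tstar k g (x + l * g 0) ∈ annM k g →
      ordS g x + 2 * (l + 1) ≤ ordS g (x + (l + 1) * g 0)
  | 0, h => by simpa using ordS_add_g_zero_of_mem_annM k hg hB hx (by simpa using h)
  | l + 1, h => by
    have hxl : x + (l + 1) * g 0 ∈ S g := add_mem hx (mul_g_zero_mem _)
    have hl := ordS_add_mul_g_zero_of_mem_annM hg hB hx l
      (tstar_mem_annM_of_add_g_zero k hg (add_mem hx (mul_g_zero_mem l))
        (by rwa [add_assoc, ← add_one_mul]))
    have := ordS_add_g_zero_of_mem_annM k hg hB hxl h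
    rw [add_assoc, ← add_one_mul] at this
    omega

end GradedRing

theorem statement4_general {k : Type*} [Field k] {n : ℕ} (g : Fin (n + 1) → ℕ)
    (hg : MinGen g) (hB : IsBuchsbaum k g)
    (i : ℕ) (hi : i < g 0) (hab : bb g i < aa g i) :
    lℓ k g i < aa g i - bb g i := by
  have hbound : ∀ l ∈ {l | tstar k g (ap g i + l * g 0) ∈ annM k g},
      l + 1 ≤ aa g i - bb g i := by
    intro l hl
    have hlow := ordS_add_mul_g_zero_of_mem_annM k hg hB (ap_mem_S_mod hg hi).1 l hl
    have hup := ordS_ap_add_mul_le hg hi (l + 1)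
    unfold bb
    omega
  have : lℓ k g i ≤ aa g i - bb g i - 1 := csSup_le' fun l hl => by have := hbound l hl; omega
  omega

/-- Proposition 3a. Assume `G(m)` is Buchsbaum and let `i` be
an index with `a_i > b_i`. Then `l_i < a_i − b_i`. -/
theorem statement4 {k : Type*} [Field k] [Infinite k] {n : ℕ} (g : Fin (n + 1) → ℕ)
    (hg : MinGen g) (hB : IsBuchsbaum k g)
    (i : ℕ) (hi : i < g 0) (hab : bb g i < aa g i) :
    lℓ k g i < aa g i - bb g i :=
  statement4_general g hg hB i hi hab

end NumSgrp
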